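/- arXiv:2601.19230 — 5 statements merged into one kernel-verified Lean document; each statement's English description precedes it below -/
import Mathlib

section
/- Let k ≥ 1 be an integer, α ∈ [2/3, 1), G a graph, and S ⊆ V(G) a (k,α)-well-linked set in G. Then there exists an S-free set F ⊆ V(G) with |F| = k − 1. -/
open SimpleGraph

/-- `(A, B)` is a separation of the graph `G`: `A ∪ B = V(G)` and there is no edge of `G`
with one endpoint in `A \ B` and the other in `B \ A`.  Its order is `(A ∩ B).ncard`. -/
def IsSep {V : Type*} (G : SimpleGraph V) (A B : Set V) : Prop :=
  A ∪ B = Set.univ ∧ ∀ a b : V, a ∈ A \ B → b ∈ B \ A → ¬ G.Adj a b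

/-- `X` is an `α`-balanced separator for `S` in `G`: every connected component `C` of
`G − X` satisfies `|V(C) ∩ S| ≤ α·|S|`. -/
def BalancedSeparator {V : Type*} (G : SimpleGraph V) (α : ℝ) (S X : Set V) : Prop :=
  ∀ C : (G.induce Xᶜ).ConnectedComponent,
    (((Subtype.val '' C.supp) ∩ S).ncard : ℝ) ≤ α * (S.ncard : ℝ)

/-- `S` is `(q, α)`-well-linked in `G`: there is no `α`-balanced separator for `S` of size
at most `q`. -/
def WellLinked {V : Type*} (G : SimpleGraph V) (q : ℕ) (α : ℝ) (S : Set V) : Prop :=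
  ∀ X : Set V, X.ncard ≤ q → ¬ BalancedSeparator G α S X

/-- `F` is `S`-free in `G` (with respect to the constant `α`): for every separation
`(A₁, A₂)` of `G` of order less than `|F|` and every side containing `F`, that side
contains more than `α·|S|` vertices of `S`. -/
def SFree {V : Type*} (G : SimpleGraph V) (α : ℝ) (S F : Set V) : Prop :=
  ∀ A₁ A₂ : Set V, IsSep G A₁ A₂ → (A₁ ∩ A₂).ncard < F.ncard →
    (F ⊆ A₁ → α * (S.ncard : ℝ) < ((A₁ ∩ S).ncard : ℝ)) ∧
    (F ⊆ A₂ → α * (S.ncard : ℝ) < ((A₂ ∩ S).ncard : ℝ))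

/-- `S` is strongly linked in `G`: for every partition `{S₁, S₂}` of `S` into two nonempty
parts, there is no separation `(A₁, A₂)` of `G` with `S₁ ⊆ A₁`, `S₂ ⊆ A₂` and
`|A₁ ∩ A₂| < min {|S₁|, |S₂|}`. -/
def StronglyLinked {V : Type*} (G : SimpleGraph V) (S : Set V) : Prop :=
  ∀ S₁ S₂ A₁ A₂ : Set V, S₁ ∪ S₂ = S → Disjoint S₁ S₂ → S₁.Nonempty → S₂.Nonempty →
    IsSep G A₁ A₂ → S₁ ⊆ A₁ → S₂ ⊆ A₂ →
    min S₁.ncard S₂.ncard ≤ (A₁ ∩ A₂).ncard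

/-- `G[A₁] ∪ G[A₂] ∪ G[A₃] = G`: the three induced subgraphs jointly cover all vertices and
all edges of `G`. -/
def TriCover {V : Type*} (G : SimpleGraph V) (A₁ A₂ A₃ : Set V) : Prop :=
  A₁ ∪ A₂ ∪ A₃ = Set.univ ∧
  ∀ u v : V, G.Adj u v →
    (u ∈ A₁ ∧ v ∈ A₁) ∨ (u ∈ A₂ ∧ v ∈ A₂) ∨ (u ∈ A₃ ∧ v ∈ A₃)

/-- `T` is a tangle of order `k` in `G`: `T` consists of separations of order less than `k`,
orients every such separation (contains exactly one of `(A,B)` and `(B,A)`), and no three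
small sides of members of `T` cover `G`. -/
def IsTangle {V : Type*} (G : SimpleGraph V) (k : ℕ) (T : Set (Set V × Set V)) : Prop :=
  (∀ p ∈ T, IsSep G p.1 p.2 ∧ (p.1 ∩ p.2).ncard < k) ∧
  (∀ A B : Set V, IsSep G A B → (A ∩ B).ncard < k → ((A, B) ∈ T ↔ (B, A) ∉ T)) ∧
  (∀ p₁ ∈ T, ∀ p₂ ∈ T, ∀ p₃ ∈ T, ¬ TriCover G p₁.1 p₂.1 p₃.1)

section Aux

variable {V : Type*}

lemma isSep_symm {G : SimpleGraph V} {A B : Set V} (h : IsSep G A B) : IsSep G B A :=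
  ⟨by rw [Set.union_comm]; exact h.1, fun a b ha hb hadj => h.2 b a hb ha hadj.symm⟩

lemma isSep_corner {G : SimpleGraph V} {A B C D : Set V} (hAB : IsSep G A B)
    (hCD : IsSep G C D) : IsSep G (A ∪ C) (B ∩ D) := by
  constructor
  · apply Set.eq_univ_of_forall
    intro v
    by_cases hB : v ∈ B
    · by_cases hD : v ∈ D
      · exact Or.inr ⟨hB, hD⟩
      · have hv : v ∈ C ∪ D := by rw [hCD.1]; trivial
        exact Or.inl (Or.inr (hv.resolve_right hD))
    · have hv : v ∈ A ∪ B := by rw [hAB.1]; trivial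
      exact Or.inl (Or.inl (hv.resolve_right hB))
  · rintro a b ⟨haAC, haBD⟩ ⟨⟨hbB, hbD⟩, hbAC⟩
    have hbA : b ∉ A := fun h => hbAC (Or.inl h)
    have hbC : b ∉ C := fun h => hbAC (Or.inr h)
    rcases haAC with haA | haC
    · by_cases haB : a ∈ B
      · have haD : a ∉ D := fun h => haBD ⟨haB, h⟩
        have haC : a ∈ C := by
          have hv : a ∈ C ∪ D := by rw [hCD.1]; trivial
          exact hv.resolve_right haD
        exact hCD.2 a b ⟨haC, haD⟩ ⟨hbD, hbC⟩
      · exact hAB.2 a b ⟨haA, haB⟩ ⟨hbB, hbA⟩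
    · by_cases haD : a ∈ D
      · have haB : a ∉ B := fun h => haBD ⟨h, haD⟩
        have haA : a ∈ A := by
          have hv : a ∈ A ∪ B := by rw [hAB.1]; trivial
          exact hv.resolve_right haB
        exact hAB.2 a b ⟨haA, haB⟩ ⟨hbB, hbA⟩
      · exact hCD.2 a b ⟨haC, haD⟩ ⟨hbD, hbC⟩

lemma submod [Fintype V] (A B C D : Set V) :
    ((A ∪ C) ∩ (B ∩ D)).ncard + ((A ∩ C) ∩ (B ∪ D)).ncard
      ≤ (A ∩ B).ncard + (C ∩ D).ncard := by
  classical
  have h1 : ((A ∪ C) ∩ (B ∩ D)) ∪ ((A ∩ C) ∩ (B ∪ D)) ⊆ (A ∩ B) ∪ (C ∩ D) := by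
    intro x hx
    simp only [Set.mem_union, Set.mem_inter_iff] at hx ⊢
    tauto
  have h2 : ((A ∪ C) ∩ (B ∩ D)) ∩ ((A ∩ C) ∩ (B ∪ D)) ⊆ (A ∩ B) ∩ (C ∩ D) := by
    intro x hx
    simp only [Set.mem_union, Set.mem_inter_iff] at hx ⊢
    tauto
  calc ((A ∪ C) ∩ (B ∩ D)).ncard + ((A ∩ C) ∩ (B ∪ D)).ncard
      = (((A ∪ C) ∩ (B ∩ D)) ∪ ((A ∩ C) ∩ (B ∪ D))).ncard
        + (((A ∪ C) ∩ (B ∩ D)) ∩ ((A ∩ C) ∩ (B ∪ D))).ncard :=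
        (Set.ncard_union_add_ncard_inter _ _ (Set.toFinite _) (Set.toFinite _)).symm
    _ ≤ ((A ∩ B) ∪ (C ∩ D)).ncard + ((A ∩ B) ∩ (C ∩ D)).ncard :=
        add_le_add (Set.ncard_le_ncard h1 (Set.toFinite _))
          (Set.ncard_le_ncard h2 (Set.toFinite _))
    _ = (A ∩ B).ncard + (C ∩ D).ncard :=
        Set.ncard_union_add_ncard_inter _ _ (Set.toFinite _) (Set.toFinite _)

lemma comp_side {G : SimpleGraph V} {C D : Set V} (hCD : IsSep G C D)
    (K : (G.induce (C ∩ D)ᶜ).ConnectedComponent) :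
    (Subtype.val '' K.supp ⊆ C \ D) ∨ (Subtype.val '' K.supp ⊆ D \ C) := by
  have hdich : ∀ a : ((C ∩ D)ᶜ : Set V), ((a : V) ∈ C \ D) ∨ ((a : V) ∈ D \ C) := by
    intro a
    have ha : (a : V) ∉ C ∩ D := a.2
    have hv : (a : V) ∈ C ∪ D := by rw [hCD.1]; trivial
    rcases hv with h | h
    · exact Or.inl ⟨h, fun hD => ha ⟨h, hD⟩⟩
    · by_cases hC : (a : V) ∈ C
      · exact Or.inl ⟨hC, fun hD => ha ⟨hC, hD⟩⟩
      · exact Or.inr ⟨h, hC⟩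
  have hstep : ∀ u w : ((C ∩ D)ᶜ : Set V), (G.induce (C ∩ D)ᶜ).Adj u w →
      (((u : V) ∈ C \ D) ↔ ((w : V) ∈ C \ D)) := by
    intro u w hadj
    have hG : G.Adj (u : V) (w : V) := hadj
    constructor
    · intro hu
      rcases hdich w with h | h
      · exact h
      · exact absurd hG (hCD.2 u w hu h)
    · intro hw
      rcases hdich u with h | h
      · exact h
      · exact absurd hG.symm (hCD.2 w u hw h)
  have hreach : ∀ u w : ((C ∩ D)ᶜ : Set V),
      (G.induce (C ∩ D)ᶜ).Reachable u w →
      (((u : V) ∈ C \ D) ↔ ((w : V) ∈ C \ D)) := by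
    intro u w h
    obtain ⟨p⟩ := h
    induction p with
    | nil => exact Iff.rfl
    | cons hadj p ih => exact (hstep _ _ hadj).trans ih
  obtain ⟨v, hv⟩ := K.exists_rep
  rcases hdich v with hside | hside
  · left
    rintro x ⟨x', hx', rfl⟩
    have hr : (G.induce (C ∩ D)ᶜ).Reachable x' v :=
      ConnectedComponent.exact (by
        rw [ConnectedComponent.mem_supp_iff] at hx'
        exact hx'.trans hv.symm)
    exact (hreach _ _ hr).mpr hside
  · right
    rintro x ⟨x', hx', rfl⟩
    have hr : (G.induce (C ∩ D)ᶜ).Reachable x' v :=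
      ConnectedComponent.exact (by
        rw [ConnectedComponent.mem_supp_iff] at hx'
        exact hx'.trans hv.symm)
    rcases hdich x' with h | h
    · exact absurd ((hreach _ _ hr).mp h).1 hside.2
    · exact h

lemma walk_transfer {G : SimpleGraph V} {P Q : Set V} :
    ∀ {u v : (P : Set V)} (p : (G.induce P).Walk u v),
      (∀ a ∈ p.support, (a : V) ∈ Q) →
      ∀ (u' v' : (Q : Set V)), (u' : V) = (u : V) → (v' : V) = (v : V) →
      (G.induce Q).Reachable u' v' := by
  intro u v p
  induction p with
  | nil =>
      intro _ u' v' hu hv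
      have h : u' = v' := Subtype.ext (hu.trans hv.symm)
      rw [h]
  | @cons a b c hadj p ih =>
      intro hsupp u' v' hu hv
      have hb : (b : V) ∈ Q := by
        apply hsupp
        rw [Walk.support_cons]
        exact List.mem_cons_of_mem _ p.start_mem_support
      have hGadj : G.Adj (a : V) (b : V) := hadj
      have hadj' : (G.induce Q).Adj u' ⟨(b : V), hb⟩ := by
        show G.Adj (u' : V) (b : V)
        rw [hu]
        exact hGadj
      refine (Adj.reachable hadj').trans (ih ?_ ⟨(b : V), hb⟩ v' rfl hv)
      intro x hx
      apply hsupp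
      rw [Walk.support_cons]
      exact List.mem_cons_of_mem _ hx

lemma comp_absorb {G : SimpleGraph V} {Y F : Set V}
    (KY : (G.induce Yᶜ).ConnectedComponent) (KF : (G.induce Fᶜ).ConnectedComponent)
    (hdisj : Subtype.val '' KY.supp ⊆ Fᶜ)
    (hmeet : (Subtype.val '' KY.supp ∩ Subtype.val '' KF.supp).Nonempty) :
    Subtype.val '' KY.supp ⊆ Subtype.val '' KF.supp := by
  classical
  obtain ⟨x, hxY, hxF⟩ := hmeet
  obtain ⟨x', hx', hxx'⟩ := hxY
  obtain ⟨x'', hx'', hxx''⟩ := hxF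
  rintro w ⟨w', hw', rfl⟩
  have hr : (G.induce Yᶜ).Reachable w' x' := by
    apply ConnectedComponent.exact
    rw [ConnectedComponent.mem_supp_iff] at hw' hx'
    rw [hw', hx']
  obtain ⟨p⟩ := hr
  have hsupp : ∀ a ∈ p.support, (a : V) ∈ Fᶜ := by
    intro a ha
    apply hdisj
    refine ⟨a, ?_, rfl⟩
    have hreach : (G.induce Yᶜ).Reachable w' a := ⟨p.takeUntil a ha⟩
    rw [ConnectedComponent.mem_supp_iff] at hw' ⊢
    rw [← ConnectedComponent.sound hreach]
    exact hw'
  have hwQ : (w' : V) ∈ Fᶜ := hsupp w' p.start_mem_support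
  have hxQ : (x' : V) ∈ Fᶜ := hsupp x' p.end_mem_support
  have hreach2 : (G.induce Fᶜ).Reachable ⟨(w' : V), hwQ⟩ ⟨(x' : V), hxQ⟩ :=
    walk_transfer p hsupp _ _ rfl rfl
  refine ⟨⟨(w' : V), hwQ⟩, ?_, rfl⟩
  rw [ConnectedComponent.mem_supp_iff]
  rw [ConnectedComponent.mem_supp_iff] at hx''
  have hxeq : (⟨(x' : V), hxQ⟩ : (Fᶜ : Set V)) = x'' := Subtype.ext (hxx''.trans hxx'.symm).symm
  rw [ConnectedComponent.sound hreach2, hxeq]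
  exact hx''

lemma nat_min_spec {P : ℕ → Prop} (h : ∃ n, P n) : ∃ n, P n ∧ ∀ m, P m → n ≤ m := by
  classical
  exact ⟨Nat.find h, Nat.find_spec h, fun m hm => Nat.find_min' h hm⟩

lemma nat_max_spec {P : ℕ → Prop} (bound : ℕ) (hb : ∀ n, P n → n ≤ bound) (h : ∃ n, P n) :
    ∃ n, P n ∧ ∀ m, P m → m ≤ n := by
  have hne : {n | P n}.Nonempty := h
  have hbdd : BddAbove {n | P n} := ⟨bound, fun n hn => hb n hn⟩
  exact ⟨sSup {n | P n}, Nat.sSup_mem hne hbdd, fun m hm => le_csSup hbdd hm⟩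

end Aux


/-- Let `k ≥ 1`, `α ∈ [2/3, 1)`, `G` a finite graph and `S ⊆ V(G)` a
`(k, α)`-well-linked set.  Then there is an `S`-free set `F ⊆ V(G)` with `|F| = k − 1`. -/
theorem exists_sFree_set {V : Type*} [Fintype V] (G : SimpleGraph V) (k : ℕ) (hk : 1 ≤ k)
    (α : ℝ) (hα₁ : 2 / 3 ≤ α) (hα₂ : α < 1) (S : Set V)
    (hS : WellLinked G k α S) :
    ∃ F : Set V, SFree G α S F ∧ F.ncard = k - 1 := by
  classical
  -- well-linkedness, component form
  have wl : ∀ X : Set V, X.ncard ≤ k → ∃ K : (G.induce Xᶜ).ConnectedComponent,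
      α * (S.ncard : ℝ) < ((Subtype.val '' K.supp ∩ S).ncard : ℝ) := by
    intro X hX
    have h := hS X hX
    unfold BalancedSeparator at h
    push_neg at h
    exact h
  have hcastS : (0:ℝ) ≤ (S.ncard : ℝ) := Nat.cast_nonneg _
  have hα23 : (2/3:ℝ) * (S.ncard:ℝ) ≤ α * (S.ncard:ℝ) :=
    mul_le_mul_of_nonneg_right hα₁ hcastS
  -- k < |S|
  have hk_lt : k < S.ncard := by
    by_contra h
    push_neg at h
    obtain ⟨K, hK⟩ := wl S h
    have himg : Subtype.val '' K.supp ∩ S = ∅ := by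
      ext x
      simp only [Set.mem_inter_iff, Set.mem_image, Set.mem_empty_iff_false, iff_false, not_and]
      rintro ⟨x', hx', rfl⟩ hxS
      exact x'.2 hxS
    rw [himg] at hK
    simp only [Set.ncard_empty, Nat.cast_zero] at hK
    nlinarith
  -- |S| ≥ 3k+1
  have hsk : 3 * k + 1 ≤ S.ncard := by
    obtain ⟨X, hXS, hXcard⟩ := Set.exists_subset_card_eq (le_of_lt hk_lt)
    obtain ⟨K, hK⟩ := wl X (le_of_eq hXcard)
    have hsub : Subtype.val '' K.supp ∩ S ⊆ S \ X := by
      rintro x ⟨⟨x', hx', rfl⟩, hxS⟩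
      exact ⟨hxS, fun hxX => x'.2 hxX⟩
    have hcard1 : (Subtype.val '' K.supp ∩ S).ncard ≤ S.ncard - k := by
      have h := Set.ncard_le_ncard hsub (Set.toFinite _)
      rwa [Set.ncard_diff hXS (Set.toFinite _), hXcard] at h
    have h1 : ((Subtype.val '' K.supp ∩ S).ncard : ℝ) ≤ (S.ncard:ℝ) - (k:ℝ) := by
      have hc : ((S.ncard - k : ℕ) : ℝ) = (S.ncard:ℝ) - (k:ℝ) :=
        Nat.cast_sub (le_of_lt hk_lt)
      calc ((Subtype.val '' K.supp ∩ S).ncard : ℝ) ≤ ((S.ncard - k : ℕ) : ℝ) :=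
            Nat.cast_le.mpr hcard1
        _ = (S.ncard:ℝ) - (k:ℝ) := hc
    have h3 : ((3*k : ℕ):ℝ) < (S.ncard:ℝ) := by
      push_cast
      nlinarith
    have := Nat.cast_lt.mp h3
    omega
  -- big sets have more than k vertices in S
  have hbig_card : ∀ X : Set V, α * (S.ncard:ℝ) < ((X ∩ S).ncard:ℝ) → k < (X ∩ S).ncard := by
    intro X hX
    have hs' : ((3*k+1 : ℕ):ℝ) ≤ (S.ncard:ℝ) := Nat.cast_le.mpr hsk
    have h : ((k:ℕ):ℝ) < ((X ∩ S).ncard : ℝ) := by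
      push_cast at hs' ⊢
      nlinarith
    exact_mod_cast h
  -- two big sets meet inside S
  have hmeet : ∀ X Y : Set V, α * (S.ncard:ℝ) < ((X ∩ S).ncard:ℝ) →
      α * (S.ncard:ℝ) < ((Y ∩ S).ncard:ℝ) → (X ∩ Y ∩ S).Nonempty := by
    intro X Y hX hY
    rw [Set.nonempty_iff_ne_empty]
    intro hempty
    have hXY : (X ∩ S) ∩ (Y ∩ S) = X ∩ Y ∩ S := by
      ext x
      simp only [Set.mem_inter_iff]
      tauto
    have hun : ((X ∩ S) ∪ (Y ∩ S)).ncard ≤ S.ncard := by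
      apply Set.ncard_le_ncard _ (Set.toFinite _)
      intro x hx
      rcases hx with h | h
      · exact h.2
      · exact h.2
    have hie := Set.ncard_union_add_ncard_inter (X ∩ S) (Y ∩ S) (Set.toFinite _) (Set.toFinite _)
    rw [hXY, hempty, Set.ncard_empty] at hie
    have hnat : (X ∩ S).ncard + (Y ∩ S).ncard ≤ S.ncard := by omega
    have hr : ((X ∩ S).ncard:ℝ) + ((Y ∩ S).ncard:ℝ) ≤ (S.ncard:ℝ) := by
      exact_mod_cast hnat
    linarith
  -- the family: separations of order ≤ k-1 with big second side; minimize |B|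
  have hbiguniv : α * (S.ncard:ℝ) < (((Set.univ : Set V) ∩ S).ncard:ℝ) := by
    rw [Set.univ_inter]
    have h0 : 0 < S.ncard := by omega
    have h0' : (0:ℝ) < (S.ncard:ℝ) := by exact_mod_cast h0
    nlinarith
  obtain ⟨mB, ⟨A₁', B₀, hsB₀, hordB₀, hbigB₀, hcardB₀⟩, hminB⟩ :=
    nat_min_spec (P := fun n => ∃ A B : Set V, IsSep G A B ∧ (A ∩ B).ncard ≤ k - 1 ∧
      α * (S.ncard:ℝ) < ((B ∩ S).ncard:ℝ) ∧ B.ncard = n)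
      ⟨(Set.univ : Set V).ncard, ∅, Set.univ,
        ⟨by simp, by intro a b ha hb; simp at ha⟩, by simp, hbiguniv, rfl⟩
  have hmin : ∀ A B : Set V, IsSep G A B → (A ∩ B).ncard ≤ k - 1 →
      α * (S.ncard:ℝ) < ((B ∩ S).ncard:ℝ) → B₀.ncard ≤ B.ncard := by
    intro A B h1 h2 h3
    rw [hcardB₀]
    exact hminB B.ncard ⟨A, B, h1, h2, h3, rfl⟩
  -- among separations with second side B₀, maximize the order
  obtain ⟨mA, ⟨A, hsA, hordA, hAcard⟩, hmaxA⟩ :=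
    nat_max_spec (P := fun n => ∃ A : Set V, IsSep G A B₀ ∧ (A ∩ B₀).ncard ≤ k - 1 ∧
      (A ∩ B₀).ncard = n) (k-1)
      (by rintro n ⟨A, _, h2, rfl⟩; exact h2)
      ⟨(A₁' ∩ B₀).ncard, A₁', hsB₀, hordB₀, rfl⟩
  have hmax : ∀ A' : Set V, IsSep G A' B₀ → (A' ∩ B₀).ncard ≤ k - 1 →
      (A' ∩ B₀).ncard ≤ (A ∩ B₀).ncard := by
    intro A' h1 h2
    rw [hAcard]
    exact hmaxA _ ⟨A', h1, h2, rfl⟩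
  -- the order is exactly k-1
  have hord : (A ∩ B₀).ncard = k - 1 := by
    rcases lt_or_eq_of_le hordA with hlt | heq
    · exfalso
      have hBbig : k < (B₀ ∩ S).ncard := hbig_card _ hbigB₀
      have hBA : ¬ B₀ ⊆ A := by
        intro hsub
        have he : A ∩ B₀ = B₀ := Set.inter_eq_right.mpr hsub
        have hb : (B₀ ∩ S).ncard ≤ B₀.ncard :=
          Set.ncard_le_ncard Set.inter_subset_left (Set.toFinite _)
        have he2 : (A ∩ B₀).ncard = B₀.ncard := by rw [he]
        omega
      obtain ⟨v, hvB, hvA⟩ := Set.not_subset.mp hBA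
      have hvnotAB : v ∉ A ∩ B₀ := fun h => hvA h.1
      have hinsord : ((insert v A) ∩ B₀).ncard = (A ∩ B₀).ncard + 1 := by
        rw [Set.insert_inter_of_mem hvB,
          Set.ncard_insert_of_notMem hvnotAB (Set.toFinite _)]
      have hins : IsSep G (insert v A) B₀ := by
        constructor
        · apply Set.eq_univ_of_forall
          intro x
          have hx : x ∈ A ∪ B₀ := by rw [hsA.1]; trivial
          rcases hx with h | h
          · exact Or.inl (Set.mem_insert_of_mem _ h)
          · exact Or.inr h
        · rintro a b ⟨haI, haB⟩ ⟨hbB, hbI⟩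
          have haA : a ∈ A := by
            rcases Set.mem_insert_iff.mp haI with rfl | h
            · exact absurd hvB haB
            · exact h
          exact hsA.2 a b ⟨haA, haB⟩ ⟨hbB, fun h => hbI (Set.mem_insert_of_mem _ h)⟩
      have hle := hmax (insert v A) hins (by omega)
      omega
    · exact heq
  -- the big component of G - F, where F = A ∩ B₀
  obtain ⟨KF, hKF⟩ := wl (A ∩ B₀) (by rw [hord]; omega)
  have hKFside := comp_side hsA KF
  have hKFB : Subtype.val '' KF.supp ⊆ B₀ \ A := by
    rcases hKFside with h | h
    · exfalso
      obtain ⟨x, hx⟩ := hmeet B₀ (Subtype.val '' KF.supp) hbigB₀ hKF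
      exact (h hx.1.2).2 hx.1.1
    · exact h
  -- key one-sided claim
  have key : ∀ C D : Set V, IsSep G C D → (C ∩ D).ncard < k - 1 → A ∩ B₀ ⊆ C →
      α * (S.ncard:ℝ) < ((C ∩ S).ncard:ℝ) := by
    intro C D hCD hYord hFC
    by_contra hCsmall
    push_neg at hCsmall
    obtain ⟨KY, hKY⟩ := wl (C ∩ D) (by omega)
    have hside := comp_side hCD KY
    have hKYD : Subtype.val '' KY.supp ⊆ D \ C := by
      rcases hside with h | h
      · exfalso
        have hsub : Subtype.val '' KY.supp ∩ S ⊆ C ∩ S := fun x hx => ⟨(h hx.1).1, hx.2⟩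
        have hle := Set.ncard_le_ncard hsub (Set.toFinite _)
        have hle' : ((Subtype.val '' KY.supp ∩ S).ncard:ℝ) ≤ ((C ∩ S).ncard:ℝ) :=
          Nat.cast_le.mpr hle
        linarith
      · exact h
    have hdisj : Subtype.val '' KY.supp ⊆ (A ∩ B₀)ᶜ := by
      intro x hx hxF
      exact (hKYD hx).2 (hFC hxF)
    have hmeet' : (Subtype.val '' KY.supp ∩ Subtype.val '' KF.supp).Nonempty := by
      obtain ⟨x, hx⟩ := hmeet _ _ hKY hKF
      exact ⟨x, hx.1.1, hx.1.2⟩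
    have habs := comp_absorb KY KF hdisj hmeet'
    have hKYBD : Subtype.val '' KY.supp ⊆ B₀ ∩ D :=
      fun x hx => ⟨(hKFB (habs hx)).1, (hKYD hx).1⟩
    have hBDbig : α * (S.ncard:ℝ) < (((B₀ ∩ D) ∩ S).ncard:ℝ) := by
      refine lt_of_lt_of_le hKY ?_
      exact Nat.cast_le.mpr (Set.ncard_le_ncard
        (fun x hx => ⟨hKYBD hx.1, hx.2⟩) (Set.toFinite _))
    have hcorner : IsSep G (A ∪ C) (B₀ ∩ D) := isSep_corner hsA hCD
    have hlow : k - 1 ≤ ((A ∩ C) ∩ (B₀ ∪ D)).ncard := by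
      rw [← hord]
      apply Set.ncard_le_ncard _ (Set.toFinite _)
      intro x hx
      exact ⟨⟨hx.1, hFC hx⟩, Or.inl hx.2⟩
    have hsb := submod A B₀ C D
    have hup : ((A ∪ C) ∩ (B₀ ∩ D)).ncard ≤ (C ∩ D).ncard := by omega
    have hge := hmin (A ∪ C) (B₀ ∩ D) hcorner (by omega) hBDbig
    have hBD : B₀ ∩ D = B₀ :=
      Set.eq_of_subset_of_ncard_le Set.inter_subset_left hge (Set.toFinite _)
    have hB₀D : B₀ ⊆ D := by rw [← hBD]; exact Set.inter_subset_right
    have hFY : A ∩ B₀ ⊆ C ∩ D := fun x hx => ⟨hFC hx, hB₀D hx.2⟩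
    have hcontra := Set.ncard_le_ncard hFY (Set.toFinite _)
    omega
  refine ⟨A ∩ B₀, ?_, hord⟩
  intro A₁ A₂ hsep12 hordlt
  rw [hord] at hordlt
  constructor
  · intro h1
    exact key A₁ A₂ hsep12 hordlt h1
  · intro h2
    refine key A₂ A₁ (isSep_symm hsep12) ?_ h2
    rwa [Set.inter_comm]
end

section
/- Let α ∈ [2/3, 1), let k ≥ 1 be an integer, let G be a graph and let S ⊆ V(G) be a (k,α)-well-linked set in G. If F ⊆ V(G) is S-free with |F| < k, then F is strongly linked in G. -/
open SimpleGraph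

section Aux

private lemma reach_mono' {V : Type*} (G : SimpleGraph V) {s t : Set V} (h : s ⊆ t) {u w : ↥s}
    (hr : (G.induce s).Reachable u w) :
    (G.induce t).Reachable ⟨u.1, h u.2⟩ ⟨w.1, h w.2⟩ :=
  hr.map ⟨Set.inclusion h, fun ha => ha⟩

private lemma side_walk' {V : Type*} (G : SimpleGraph V) {A₁ A₂ X : Set V}
    (hcov : ∀ v : V, v ∉ X → (v ∈ A₁ ∧ v ∉ A₂) ∨ (v ∈ A₂ ∧ v ∉ A₁))
    (hE : ∀ a b : V, a ∈ A₁ \ A₂ → b ∈ A₂ \ A₁ → ¬ G.Adj a b)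
    {u w : ↥Xᶜ} (p : (G.induce Xᶜ).Walk u w)
    (hu : ↑u ∈ A₁ ∧ ↑u ∉ A₂) : ↑w ∈ A₁ ∧ ↑w ∉ A₂ := by
  induction p with
  | nil => exact hu
  | @cons a b c ha p ih =>
    apply ih
    rcases hcov ↑b b.2 with hb | hb
    · exact hb
    · exact absurd (ha : G.Adj ↑a ↑b) (hE ↑a ↑b ⟨hu.1, hu.2⟩ ⟨hb.1, hb.2⟩)

end Aux

/-- Let `α ∈ [2/3, 1)`, `k ≥ 1`, `G` a finite graph and `S` a
`(k, α)`-well-linked set in `G`.  If `F` is `S`-free with `|F| < k`, then `F` is strongly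
linked in `G`. -/
theorem sFree_stronglyLinked {V : Type*} [Fintype V] (G : SimpleGraph V) (k : ℕ)
    (hk : 1 ≤ k) (α : ℝ) (hα₁ : 2 / 3 ≤ α) (hα₂ : α < 1) (S : Set V)
    (hS : WellLinked G k α S) (F : Set V) (hF : SFree G α S F) (hFk : F.ncard < k) :
    StronglyLinked G F := by
  intro F₁ F₂ A₁ A₂ hun hdisj hne₁ hne₂ hsep hsub₁ hsub₂
  by_contra hcon
  push_neg at hcon
  set X := A₁ ∩ A₂ with hXdef
  have hfin : ∀ s : Set V, s.Finite := fun s => s.toFinite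
  have hX1 : X.ncard < F₁.ncard := lt_of_lt_of_le hcon (min_le_left _ _)
  have hX2 : X.ncard < F₂.ncard := lt_of_lt_of_le hcon (min_le_right _ _)
  have hFcard : F.ncard = F₁.ncard + F₂.ncard := by
    rw [← hun, Set.ncard_union_eq hdisj (hfin _) (hfin _)]
  have hF1le : F₁.ncard ≤ F.ncard :=
    Set.ncard_le_ncard (by rw [← hun]; exact Set.subset_union_left) (hfin _)
  have hXk : X.ncard ≤ k := by omega
  have hcov : ∀ v : V, v ∉ X → (v ∈ A₁ ∧ v ∉ A₂) ∨ (v ∈ A₂ ∧ v ∉ A₁) := by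
    intro v hv
    have hvu : v ∈ A₁ ∪ A₂ := hsep.1 ▸ Set.mem_univ v
    rcases hvu with h | h
    · exact Or.inl ⟨h, fun h2 => hv ⟨h, h2⟩⟩
    · by_cases h1 : v ∈ A₁
      · exact absurd ⟨h1, h⟩ hv
      · exact Or.inr ⟨h, h1⟩
  -- first well-linkedness application
  have hBS := hS X hXk
  unfold BalancedSeparator at hBS
  push_neg at hBS
  obtain ⟨C, hC⟩ := hBS
  set Cs := Subtype.val '' C.supp with hCsdef
  have hCsX : Cs ⊆ Xᶜ := by rintro _ ⟨u, _, rfl⟩; exact u.2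
  -- the component lies on one side
  have hside : Cs ⊆ A₁ \ A₂ ∨ Cs ⊆ A₂ \ A₁ := by
    obtain ⟨v, hv⟩ := C.exists_rep
    have hvmem : v ∈ C.supp := (SimpleGraph.ConnectedComponent.mem_supp_iff C v).mpr hv
    have hreach : ∀ w ∈ C.supp, (G.induce Xᶜ).Reachable v w := by
      intro w hw
      rw [SimpleGraph.ConnectedComponent.mem_supp_iff] at hw
      exact SimpleGraph.ConnectedComponent.exact (hv.trans hw.symm)
    rcases hcov ↑v v.2 with hv1 | hv1
    · left
      rintro _ ⟨w, hw, rfl⟩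
      obtain ⟨p⟩ := hreach w hw
      exact ⟨(side_walk' G hcov hsep.2 p hv1).1, (side_walk' G hcov hsep.2 p hv1).2⟩
    · right
      rintro _ ⟨w, hw, rfl⟩
      have hE' : ∀ a b : V, a ∈ A₂ \ A₁ → b ∈ A₁ \ A₂ → ¬ G.Adj a b :=
        fun a b ha hb hadj => hsep.2 b a hb ha hadj.symm
      have hcov' : ∀ v : V, v ∉ X → (v ∈ A₂ ∧ v ∉ A₁) ∨ (v ∈ A₁ ∧ v ∉ A₂) :=
        fun v hv => (hcov v hv).symm
      obtain ⟨p⟩ := hreach w hw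
      exact ⟨(side_walk' G hcov' hE' p hv1).1, (side_walk' G hcov' hE' p hv1).2⟩
  have hcard : (F ∩ Cs).ncard + X.ncard < F.ncard := by
    rcases hside with h | h
    · have hsubF : F ∩ Cs ⊆ F₁ := by
        rintro x ⟨hxF, hxC⟩
        rw [← hun] at hxF
        rcases hxF with h1 | h2
        · exact h1
        · exact absurd (hsub₂ h2) (h hxC).2
      have := Set.ncard_le_ncard hsubF (hfin _)
      omega
    · have hsubF : F ∩ Cs ⊆ F₂ := by
        rintro x ⟨hxF, hxC⟩
        rw [← hun] at hxF
        rcases hxF with h1 | h2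
        · exact absurd (hsub₁ h1) (h hxC).2
        · exact h2
      have := Set.ncard_le_ncard hsubF (hfin _)
      omega
  have hX'card : (X ∪ (F ∩ Cs)).ncard < F.ncard := by
    have := Set.ncard_union_le X (F ∩ Cs)
    omega
  have hX'k : (X ∪ (F ∩ Cs)).ncard ≤ k := by omega
  set X' := X ∪ (F ∩ Cs) with hX'def
  have hXX' : X ⊆ X' := Set.subset_union_left
  -- second well-linkedness application
  have hBS' := hS X' hX'k
  unfold BalancedSeparator at hBS'
  push_neg at hBS'
  obtain ⟨C', hC'⟩ := hBS'
  set Cs' := Subtype.val '' C'.supp with hCs'def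
  have hCs'X' : Cs' ⊆ X'ᶜ := by rintro _ ⟨u, _, rfl⟩; exact u.2
  have hSnn : (0:ℝ) ≤ (S.ncard : ℝ) := Nat.cast_nonneg _
  -- common vertex of Cs and Cs'
  have hinter : ((Cs ∩ S) ∩ (Cs' ∩ S)).Nonempty := by
    by_contra h
    rw [Set.not_nonempty_iff_eq_empty] at h
    have h1 : ((Cs ∩ S) ∪ (Cs' ∩ S)).ncard ≤ S.ncard :=
      Set.ncard_le_ncard
        (Set.union_subset Set.inter_subset_right Set.inter_subset_right) (hfin _)
    have h2 : ((Cs ∩ S) ∪ (Cs' ∩ S)).ncard = (Cs ∩ S).ncard + (Cs' ∩ S).ncard :=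
      Set.ncard_union_eq (Set.disjoint_iff_inter_eq_empty.mpr h) (hfin _) (hfin _)
    rw [h2] at h1
    have h3 : ((Cs ∩ S).ncard + (Cs' ∩ S).ncard : ℝ) ≤ (S.ncard : ℝ) := by
      exact_mod_cast h1
    push_cast at h3
    nlinarith
  obtain ⟨v, ⟨hvCs, hvS⟩, hvCs', -⟩ := hinter
  -- Cs' ⊆ Cs
  have hsub' : Cs' ⊆ Cs := by
    rintro _ ⟨w', hw', rfl⟩
    obtain ⟨v', hv', hv'val⟩ := hvCs'
    obtain ⟨v'', hv'', hv''val⟩ := hvCs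
    rw [SimpleGraph.ConnectedComponent.mem_supp_iff] at hw' hv'
    have hr : (G.induce X'ᶜ).Reachable w' v' :=
      SimpleGraph.ConnectedComponent.exact (hw'.trans hv'.symm)
    have hcompl : X'ᶜ ⊆ Xᶜ := Set.compl_subset_compl.mpr hXX'
    have hr2 := reach_mono' G hcompl hr
    have heq : (⟨↑v', hcompl v'.2⟩ : ↥Xᶜ) = v'' := Subtype.ext (hv'val.trans hv''val.symm)
    refine ⟨⟨↑w', hcompl w'.2⟩, ?_, rfl⟩
    rw [SimpleGraph.ConnectedComponent.mem_supp_iff]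
    rw [SimpleGraph.ConnectedComponent.mem_supp_iff] at hv''
    calc (G.induce Xᶜ).connectedComponentMk ⟨↑w', hcompl w'.2⟩
        = (G.induce Xᶜ).connectedComponentMk ⟨↑v', hcompl v'.2⟩ :=
          SimpleGraph.ConnectedComponent.sound hr2
      _ = (G.induce Xᶜ).connectedComponentMk v'' := by rw [heq]
      _ = C := hv''
  -- F avoids Cs'
  have hFCs' : F ⊆ Cs'ᶜ := by
    intro x hx hxC'
    exact (hCs'X' hxC') (Or.inr ⟨hx, hsub' hxC'⟩)
  -- the final separation
  have hsep2 : IsSep G (Cs' ∪ X') Cs'ᶜ := by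
    constructor
    · apply Set.eq_univ_of_univ_subset
      intro x _
      by_cases hx : x ∈ Cs'
      · exact Or.inl (Or.inl hx)
      · exact Or.inr hx
    · rintro a b ⟨haB, hanB⟩ ⟨hbB, hbnA⟩ hadj
      have haC : a ∈ Cs' := not_not.mp hanB
      have hbX' : b ∉ X' := fun h => hbnA (Or.inr h)
      obtain ⟨a', ha', rfl⟩ := haC
      have hadj' : (G.induce X'ᶜ).Adj a' ⟨b, hbX'⟩ := hadj
      apply hbB
      refine ⟨⟨b, hbX'⟩, ?_, rfl⟩
      rw [SimpleGraph.ConnectedComponent.mem_supp_iff] at ha' ⊢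
      exact (SimpleGraph.ConnectedComponent.sound hadj'.symm.reachable).trans ha'
  have horder : ((Cs' ∪ X') ∩ Cs'ᶜ).ncard < F.ncard := by
    have hsubX' : (Cs' ∪ X') ∩ Cs'ᶜ ⊆ X' := by
      rintro x ⟨hx1, hx2⟩
      rcases hx1 with h | h
      · exact absurd h hx2
      · exact h
    exact lt_of_le_of_lt (Set.ncard_le_ncard hsubX' (hfin _)) hX'card
  have hbig := (hF (Cs' ∪ X') Cs'ᶜ hsep2 horder).2 hFCs'
  -- but Cs'ᶜ ∩ S is small
  have hsplit : (Cs' ∩ S).ncard + (Cs'ᶜ ∩ S).ncard = S.ncard := by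
    rw [← Set.ncard_union_eq (by
      exact Set.disjoint_of_subset Set.inter_subset_left Set.inter_subset_left
        disjoint_compl_right) (hfin _) (hfin _)]
    congr 1
    rw [← Set.union_inter_distrib_right, Set.union_compl_self, Set.univ_inter]
  have hsplitR : ((Cs' ∩ S).ncard : ℝ) + ((Cs'ᶜ ∩ S).ncard : ℝ) = (S.ncard : ℝ) := by
    exact_mod_cast hsplit
  nlinarith
end

section
/- Let k ≥ 1 be an integer, let G be a graph and let F ⊆ V(G) be a strongly linked set of size 3k in G. Then the treewidth of G is at least k; that is, every tree-decomposition (T, β) of G has width at least k (some bag β(t) has size at least k+1). -/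
open SimpleGraph

/-- `(T, β)` is a tree-decomposition of `G`: `T` is a tree, every vertex of `G` lies in some
bag, every edge of `G` lies in some bag, and for every vertex `v` the nodes whose bag
contains `v` induce a (connected, hence nonempty) subtree of `T`. -/
def IsTreeDecomp {V ι : Type*} (G : SimpleGraph V) (T : SimpleGraph ι) (β : ι → Set V) :
    Prop :=
  T.IsTree ∧
  (∀ v : V, ∃ t : ι, v ∈ β t) ∧
  (∀ u v : V, G.Adj u v → ∃ t : ι, u ∈ β t ∧ v ∈ β t) ∧
  (∀ v : V, (T.induce {t : ι | v ∈ β t}).Connected)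

/-!
For `k = 1` all bags have at most one vertex, so `G` has no edges, which no strongly linked set of
two or more vertices allows. Let `k ≥ 2` and suppose every bag has at most `k` vertices. A tree
edge `st` induces a separation of order at most `|β s ∩ β t| ≤ k`, and since `|F| ≥ 2(k + 1)`,
strong linkedness makes one of its two sides light: it holds at most `|β s ∩ β t|` vertices of
`F`. Orienting every edge towards a heavy side, we find a node `t₀` all of whose branches are
light. Taking a maximal union of components of `G - β t₀` with few vertices of `F` shows that one
component `C` carries at least `|F| - 2 |β t₀|` of them; as `C` lies inside a single light branch,
this forces `|β t₀| = k` and `|F ∩ C| = k`. Walking from `t₀` towards a bag that meets `C`, every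
edge again has `F ∩ C` alone on its far side, so every bag on the way equals `β t₀`, which is
absurd once the walk reaches that bag. The tree may be infinite; termination comes from the
distance to a fixed node.
-/

open Set

lemma Set.eq_of_ncard_le_ncard_inter {α : Type*} [Finite α] {A B : Set α} {k : ℕ}
    (hA : A.ncard ≤ k) (hB : B.ncard ≤ k) (h : k ≤ (A ∩ B).ncard) : A = B :=
  (eq_of_subset_of_ncard_le inter_subset_left (hA.trans h)).symm.trans
    (eq_of_subset_of_ncard_le inter_subset_right (hB.trans h))

section Separations

variable {V : Type*} {G : SimpleGraph V} {F A B X U : Set V} {f : V}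

lemma StronglyLinked.min_ncard_inter_le [Finite V] (hF : StronglyLinked G F)
    (hsep : IsSep G A B) (hF₂ : 2 * ((A ∩ B).ncard + 1) ≤ F.ncard) :
    min (F ∩ A).ncard (F ∩ B).ncard ≤ (A ∩ B).ncard := by
  by_contra! h
  rw [lt_min_iff] at h
  set r := (A ∩ B).ncard
  -- `S₁` swallows `F ∩ (A \ B)` and has at least `r + 1` elements, but leaves `r + 1` outside.
  obtain ⟨S₁, hS₁l, hS₁r, hS₁card⟩ := exists_subsuperset_card_eq
    (inter_subset_inter_right F sdiff_subset) (le_max_left _ (r + 1))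
    (max_le (ncard_le_ncard (inter_subset_inter_right F sdiff_subset)) h.1)
  have hS₁F : S₁ ⊆ F := hS₁r.trans inter_subset_left
  have hS₂B : F \ S₁ ⊆ B := fun v hv => by
    by_contra hvB
    have hvA : v ∈ A := (hsep.1 ▸ mem_univ v : v ∈ A ∪ B).resolve_right hvB
    exact hv.2 (hS₁l ⟨hv.1, hvA, hvB⟩)
  have hsplit : (F ∩ (A \ B)).ncard + (F ∩ B).ncard ≤ F.ncard := by
    rw [← ncard_union_eq (by grind)]
    exact ncard_le_ncard (union_subset inter_subset_left inter_subset_left)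
  have hS₂card : (F \ S₁).ncard + S₁.ncard = F.ncard := ncard_sdiff_add_ncard_of_subset hS₁F
  have hmin := hF S₁ (F \ S₁) A B (union_sdiff_cancel hS₁F) disjoint_sdiff_right
    (nonempty_of_ncard_ne_zero (by omega)) (nonempty_of_ncard_ne_zero (by omega)) hsep
    (hS₁r.trans inter_subset_right) hS₂B
  omega

lemma StronglyLinked.exists_adj [Finite V] (hF : StronglyLinked G F) (h : 2 ≤ F.ncard) :
    ∃ u v, G.Adj u v := by
  by_contra! hG
  obtain ⟨f, hf⟩ := nonempty_of_ncard_ne_zero (by omega : F.ncard ≠ 0)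
  have := hF.min_ncard_inter_le (A := {f}) (B := {f}ᶜ)
    ⟨union_compl_self _, fun a b _ _ => hG a b⟩ (by simpa using h)
  rw [inter_compl_self, inter_singleton_of_mem hf, ← sdiff_eq,
    ncard_sdiff_singleton_of_mem hf, ncard_singleton, ncard_empty] at this
  omega

namespace SimpleGraph

def reachOutside (G : SimpleGraph V) (X : Set V) (f : V) : Set V :=
  {w | Relation.ReflTransGen (fun a b => G.Adj a b ∧ b ∉ X) f w}

def IsClosedOutside (G : SimpleGraph V) (X U : Set V) : Prop :=
  ∀ a b, G.Adj a b → a ∈ U → b ∉ X → b ∈ U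

lemma mem_reachOutside_self : f ∈ G.reachOutside X f := Relation.ReflTransGen.refl

lemma isClosedOutside_reachOutside : G.IsClosedOutside X (G.reachOutside X f) :=
  fun _ _ hab ha hb => ha.tail ⟨hab, hb⟩

lemma IsClosedOutside.union {U' : Set V} (hU : G.IsClosedOutside X U)
    (hU' : G.IsClosedOutside X U') : G.IsClosedOutside X (U ∪ U') :=
  fun a b hab ha hb => ha.imp (hU a b hab · hb) (hU' a b hab · hb)

lemma IsClosedOutside.isSep (hU : G.IsClosedOutside X U) : IsSep G (U ∪ X) Uᶜ :=
  ⟨union_compl_self U ▸ by grind,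
    fun a b ha hb hab => hb.1 (hU a b hab (by grind) (by grind))⟩

end SimpleGraph

lemma StronglyLinked.exists_ncard_le_add_reachOutside [Finite V] (hF : StronglyLinked G F)
    (hX : 2 * (X.ncard + 1) ≤ F.ncard) :
    ∃ f ∉ X, F.ncard ≤ 2 * X.ncard + (F ∩ G.reachOutside X f).ncard := by
  obtain ⟨U, hU⟩ :=
    (toFinite {U | G.IsClosedOutside X U ∧ (F ∩ (U ∪ X)).ncard ≤ X.ncard}).exists_maximal
      ⟨∅, fun _ _ _ h => h.elim, by simpa using ncard_le_ncard inter_subset_right⟩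
  obtain ⟨f, -, hfUX⟩ := not_subset.mp fun h : F ⊆ U ∪ X => by
    have := hU.prop.2
    rw [inter_eq_left.mpr h] at this
    omega
  set C := G.reachOutside X f
  have hUC : G.IsClosedOutside X (U ∪ C) := hU.prop.1.union isClosedOutside_reachOutside
  have hbig : X.ncard < (F ∩ (U ∪ C ∪ X)).ncard := by
    by_contra! h
    have := hU.eq_of_subset ⟨hUC, h⟩ subset_union_left
    exact hfUX (Or.inl (this ▸ Or.inr mem_reachOutside_self))
  have horder : ((U ∪ C ∪ X) ∩ (U ∪ C)ᶜ).ncard ≤ X.ncard := ncard_le_ncard (by grind)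
  have hsmall : (F ∩ (U ∪ C)ᶜ).ncard ≤ X.ncard := by
    have := hF.min_ncard_inter_le hUC.isSep (by omega)
    omega
  refine ⟨f, fun h => hfUX (Or.inr h), ?_⟩
  calc F.ncard ≤ ((F ∩ (U ∪ X)) ∪ (F ∩ C) ∪ (F ∩ (U ∪ C)ᶜ)).ncard :=
        ncard_le_ncard (by grind)
    _ ≤ (F ∩ (U ∪ X)).ncard + (F ∩ C).ncard + (F ∩ (U ∪ C)ᶜ).ncard :=
      (ncard_union_le _ _).trans (by gcongr; exact ncard_union_le _ _)
    _ ≤ 2 * X.ncard + (F ∩ C).ncard := by have := hU.prop.2; omega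

end Separations

namespace SimpleGraph

variable {ι : Type*} {T : SimpleGraph ι} {s t u n a b : ι}

def branch (T : SimpleGraph ι) (s t : ι) : Set ι :=
  {n | (T.deleteEdges {s(s, t)}).Reachable t n}

lemma mem_branch_self : t ∈ T.branch s t := Reachable.refl _

lemma mem_branch_of_adj (ha : a ∈ T.branch s t) (hab : T.Adj a b) (he : s(a, b) ≠ s(s, t)) :
    b ∈ T.branch s t :=
  Reachable.trans ha (deleteEdges_adj.mpr ⟨hab, he⟩).reachable

lemma mem_edges_of_notMem_branch (w : T.Walk a b) (ha : a ∉ T.branch s t)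
    (hb : b ∈ T.branch s t) : s(s, t) ∈ w.edges := by
  by_contra h
  exact ha <| Reachable.trans hb <|
    reachable_deleteEdges_iff_exists_walk.mpr ⟨w.reverse, by simpa⟩

lemma Connected.mem_branch_or_mem_branch (hT : T.Connected) (s t n : ι) :
    n ∈ T.branch s t ∨ n ∈ T.branch t s := by
  induction (reachable_iff_reflTransGen t n).mp (hT.preconnected t n) with
  | refl => exact Or.inl mem_branch_self
  | @tail a b _ hab ih =>
    by_cases he : s(a, b) = s(s, t)
    · rcases Sym2.eq_iff.mp he with ⟨-, rfl⟩ | ⟨-, rfl⟩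
      exacts [Or.inl mem_branch_self, Or.inr mem_branch_self]
    · refine ih.imp (mem_branch_of_adj · hab he) (mem_branch_of_adj · hab ?_)
      rwa [Sym2.eq_swap (a := t)]

lemma Connected.exists_adj_mem_branch (hT : T.Connected) (hn : n ≠ t) :
    ∃ s, T.Adj t s ∧ n ∈ T.branch t s := by
  obtain ⟨p, hp⟩ := (hT.preconnected t n).exists_isPath
  cases p with
  | nil => exact absurd rfl hn
  | cons h q =>
    refine ⟨_, h, reachable_deleteEdges_iff_exists_walk.mpr ⟨q, fun he => ?_⟩⟩
    exact ((Walk.cons_isPath_iff h q).mp hp).2 (q.fst_mem_support_of_mem_edges he)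

lemma IsAcyclic.notMem_branch (hT : T.IsAcyclic) (hst : T.Adj s t) : s ∉ T.branch s t :=
  fun h => isBridge_iff.mp (isAcyclic_iff_forall_adj_isBridge.mp hT hst) h.symm

lemma IsAcyclic.disjoint_branch (hT : T.IsAcyclic) (hst : T.Adj s t) :
    Disjoint (T.branch s t) (T.branch t s) := by
  refine Set.disjoint_left.mpr fun n h₁ h₂ => hT.notMem_branch hst (Reachable.trans h₁ ?_)
  have h₂' : (T.deleteEdges {s(s, t)}).Reachable s n := by rw [Sym2.eq_swap]; exact h₂
  exact h₂'.symm

lemma IsAcyclic.branch_subset_branch (hT : T.IsAcyclic) (hst : T.Adj s t) (htu : T.Adj t u)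
    (hus : u ≠ s) : T.branch t u ⊆ T.branch s t := by
  classical
  intro n hn
  by_contra hns
  obtain ⟨w, hw⟩ := reachable_deleteEdges_iff_exists_walk.mp hn
  have hu : u ∈ T.branch s t := mem_branch_of_adj mem_branch_self htu (by simp [hus, hst.ne'])
  have ht : t ∈ w.support := by
    simpa using w.reverse.snd_mem_support_of_mem_edges (mem_edges_of_notMem_branch _ hns hu)
  exact hT.notMem_branch htu <| reachable_deleteEdges_iff_exists_walk.mpr
    ⟨w.takeUntil t ht, fun h => hw (w.edges_takeUntil_subset_edges ht h)⟩

lemma IsAcyclic.dist_lt_dist_of_mem_branch (hT : T.IsAcyclic) (hst : T.Adj s t)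
    (hn : n ∈ T.branch s t) : T.dist t n < T.dist s n := by
  classical
  obtain ⟨w, hw⟩ :=
    (hst.reachable.trans (hn.mono (deleteEdges_le _))).exists_walk_length_eq_dist
  have ht : t ∈ w.support :=
    w.snd_mem_support_of_mem_edges (mem_edges_of_notMem_branch w (hT.notMem_branch hst) hn)
  calc T.dist t n ≤ (w.dropUntil t ht).length := dist_le _
    _ < w.length := Walk.length_dropUntil_lt_length ht hst.ne'
    _ = T.dist s n := hw

lemma IsAcyclic.false_of_descent (hT : T.IsAcyclic) {P : ι → ι → Prop}
    (hP : ∀ s t, P s t → T.Adj s t ∧ n ∈ T.branch s t)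
    (hstep : ∀ s t, P s t → ∃ u, P t u)
    (h₀ : P s t) : False := by
  induction hd : T.dist t n using Nat.strong_induction_on generalizing s t with
  | _ d ih =>
    obtain ⟨u, htu⟩ := hstep s t h₀
    obtain ⟨hadj, hn⟩ := hP t u htu
    exact ih _ (hd ▸ hT.dist_lt_dist_of_mem_branch hadj hn) htu rfl

end SimpleGraph

section TreeDecomposition

variable {V ι : Type*} {G : SimpleGraph V} {T : SimpleGraph ι} {β : ι → Set V} {s t u n : ι}
  {v a b f : V}

def branchVerts (T : SimpleGraph ι) (β : ι → Set V) (s t : ι) : Set V :=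
  {v | ∃ n ∈ T.branch s t, v ∈ β n}

def strictBranchVerts (T : SimpleGraph ι) (β : ι → Set V) (s t : ι) : Set V :=
  branchVerts T β s t \ branchVerts T β t s

lemma branchVerts_mono {s' t' : ι} (h : T.branch s' t' ⊆ T.branch s t) :
    branchVerts T β s' t' ⊆ branchVerts T β s t :=
  fun _ ⟨n, hn, hv⟩ => ⟨n, h hn, hv⟩

namespace IsTreeDecomp

lemma mem_branchVerts_or (hTD : IsTreeDecomp G T β) (s t : ι) (v : V) :
    v ∈ branchVerts T β s t ∨ v ∈ branchVerts T β t s := by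
  obtain ⟨n, hn⟩ := hTD.2.1 v
  exact (hTD.1.connected.mem_branch_or_mem_branch s t n).imp (⟨n, ·, hn⟩) (⟨n, ·, hn⟩)

lemma inter_branchVerts_subset (hTD : IsTreeDecomp G T β) (hst : T.Adj s t) :
    branchVerts T β s t ∩ branchVerts T β t s ⊆ β s ∩ β t := by
  rintro v ⟨⟨n₁, hn₁, hv₁⟩, ⟨n₂, hn₂, hv₂⟩⟩
  obtain ⟨w⟩ := (hTD.2.2.2 v).preconnected ⟨n₂, hv₂⟩ ⟨n₁, hv₁⟩
  set w' := w.map (Embedding.induce _).toHom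
  have he : s(s, t) ∈ w'.edges := mem_edges_of_notMem_branch w'
    (fun h => (hTD.1.isAcyclic.disjoint_branch hst).notMem_of_mem_right hn₂ h) hn₁
  have hsupp : ∀ m ∈ w'.support, v ∈ β m := by
    simp only [w', Walk.support_map, List.mem_map]
    rintro _ ⟨m, -, rfl⟩
    exact m.2
  exact ⟨hsupp s (w'.fst_mem_support_of_mem_edges he),
    hsupp t (w'.snd_mem_support_of_mem_edges he)⟩

lemma isSep_branchVerts (hTD : IsTreeDecomp G T β) (s t : ι) :
    IsSep G (branchVerts T β s t) (branchVerts T β t s) := by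
  refine ⟨eq_univ_of_forall (hTD.mem_branchVerts_or s t), fun a b ha hb hab => ?_⟩
  obtain ⟨n, hna, hnb⟩ := hTD.2.2.1 a b hab
  rcases hTD.1.connected.mem_branch_or_mem_branch s t n with h | h
  exacts [hb.2 ⟨n, h, hnb⟩, ha.2 ⟨n, h, hna⟩]

lemma mem_branch_of_mem_strictBranchVerts (hTD : IsTreeDecomp G T β)
    (hv : v ∈ strictBranchVerts T β s t) (hn : v ∈ β n) : n ∈ T.branch s t :=
  (hTD.1.connected.mem_branch_or_mem_branch s t n).resolve_right fun h => hv.2 ⟨n, h, hn⟩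

lemma exists_mem_strictBranchVerts (hTD : IsTreeDecomp G T β) (hv : v ∉ β t) :
    ∃ s, T.Adj t s ∧ v ∈ strictBranchVerts T β t s := by
  obtain ⟨n, hn⟩ := hTD.2.1 v
  obtain ⟨s, hts, hns⟩ := hTD.1.connected.exists_adj_mem_branch (t := t) (n := n)
    (by rintro rfl; exact hv hn)
  exact ⟨s, hts, ⟨n, hns, hn⟩,
    fun h => hv (hTD.inter_branchVerts_subset hts ⟨⟨n, hns, hn⟩, h⟩).1⟩

lemma mem_strictBranchVerts_of_adj (hTD : IsTreeDecomp G T β) (hts : T.Adj t s)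
    (ha : a ∈ strictBranchVerts T β t s) (hab : G.Adj a b) (hb : b ∉ β t) :
    b ∈ strictBranchVerts T β t s := by
  obtain ⟨n, hna, hnb⟩ := hTD.2.2.1 a b hab
  have hn : n ∈ T.branch t s := hTD.mem_branch_of_mem_strictBranchVerts ha hna
  exact ⟨⟨n, hn, hnb⟩,
    fun h => hb (hTD.inter_branchVerts_subset hts ⟨⟨n, hn, hnb⟩, h⟩).1⟩

lemma exists_reachOutside_subset (hTD : IsTreeDecomp G T β) (hf : f ∉ β t) :
    ∃ s, T.Adj t s ∧ G.reachOutside (β t) f ⊆ strictBranchVerts T β t s := by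
  obtain ⟨s, hts, hfs⟩ := hTD.exists_mem_strictBranchVerts hf
  refine ⟨s, hts, fun v hv => ?_⟩
  induction hv with
  | refl => exact hfs
  | tail _ hab ih => exact hTD.mem_strictBranchVerts_of_adj hts ih hab.1 hab.2

lemma strictBranchVerts_subset (hTD : IsTreeDecomp G T β) (hst : T.Adj s t) (htu : T.Adj t u)
    (hus : u ≠ s) : strictBranchVerts T β t u ⊆ strictBranchVerts T β s t :=
  sdiff_subset_sdiff (branchVerts_mono (hTD.1.isAcyclic.branch_subset_branch hst htu hus))
    (branchVerts_mono (hTD.1.isAcyclic.branch_subset_branch htu.symm hst.symm hus.symm))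

variable [Finite V] {F : Set V} {k : ℕ}

lemma ncard_inter_branchVerts_le_or (hTD : IsTreeDecomp G T β) (hF : StronglyLinked G F)
    (hbag : ∀ t, (β t).ncard ≤ k) (hk : 2 * (k + 1) ≤ F.ncard) (hst : T.Adj s t) :
    (F ∩ branchVerts T β s t).ncard ≤ (β s ∩ β t).ncard ∨
      (F ∩ branchVerts T β t s).ncard ≤ (β s ∩ β t).ncard := by
  have horder := ncard_le_ncard (hTD.inter_branchVerts_subset hst)
  have hbk : (β s ∩ β t).ncard ≤ k := (ncard_le_ncard inter_subset_left).trans (hbag s)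
  have := hF.min_ncard_inter_le (hTD.isSep_branchVerts s t) (by omega)
  omega

lemma exists_sink (hTD : IsTreeDecomp G T β) (hF : StronglyLinked G F)
    (hbag : ∀ t, (β t).ncard ≤ k) (hk : 2 * (k + 1) ≤ F.ncard) :
    ∃ t, ∀ s, T.Adj t s → (F ∩ branchVerts T β t s).ncard ≤ (β t ∩ β s).ncard := by
  by_contra! hbig
  let Big s t := T.Adj s t ∧ (β s ∩ β t).ncard < (F ∩ branchVerts T β s t).ncard
  -- A heavy edge minimising `|F ∩ strictBranchVerts|` fixes a vertex of `F` that stays strictly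
  -- ahead along any chain of heavy edges starting there.
  obtain ⟨r⟩ := hTD.1.connected.nonempty
  obtain ⟨⟨s₀, t₀⟩, hbig₀ : Big s₀ t₀, hmin⟩ :=
    (measure fun p : ι × ι => (F ∩ strictBranchVerts T β p.1 p.2).ncard).wf.has_min
      {p | Big p.1 p.2} (let ⟨s, h⟩ := hbig r; ⟨(r, s), h⟩)
  set F₀ := F ∩ strictBranchVerts T β s₀ t₀
  have hcover : F ∩ branchVerts T β s₀ t₀ ⊆ F₀ ∪ (β s₀ ∩ β t₀) := by
    intro v hv
    by_cases h : v ∈ branchVerts T β t₀ s₀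
    · exact Or.inr (hTD.inter_branchVerts_subset hbig₀.1 ⟨hv.2, h⟩)
    · exact Or.inl ⟨hv.1, hv.2, h⟩
  obtain ⟨v, hv⟩ : F₀.Nonempty := nonempty_of_ncard_ne_zero fun h0 => by
    have := (ncard_le_ncard hcover).trans (ncard_union_le _ _)
    have := hbig₀.2
    omega
  obtain ⟨n, hn⟩ := hTD.2.1 v
  refine hTD.1.isAcyclic.false_of_descent (n := n)
    (P := fun s t => Big s t ∧ F ∩ strictBranchVerts T β s t = F₀)
    (fun s t h => ⟨h.1.1, hTD.mem_branch_of_mem_strictBranchVerts (h.2 ▸ hv).2 hn⟩)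
    (fun s t ⟨⟨hst, hst_big⟩, hF₀⟩ => ?_) ⟨hbig₀, rfl⟩
  obtain ⟨u, htu, htu_big⟩ := hbig t
  have hus : u ≠ s := by
    rintro rfl
    have := hTD.ncard_inter_branchVerts_le_or hF hbag hk hst
    rw [inter_comm (β t)] at htu_big
    omega
  have hsub : F ∩ strictBranchVerts T β t u ⊆ F₀ :=
    hF₀ ▸ inter_subset_inter_right F (hTD.strictBranchVerts_subset hst htu hus)
  exact ⟨u, ⟨htu, htu_big⟩,
    eq_of_subset_of_ncard_le hsub (not_lt.mp (hmin (t, u) ⟨htu, htu_big⟩))⟩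

lemma false_of_sink (hTD : IsTreeDecomp G T β) (hF : StronglyLinked G F)
    (hbag : ∀ t, (β t).ncard ≤ k) (hk : 2 ≤ k) (hF₃ : 3 * k ≤ F.ncard) {t₀ : ι}
    (hsink : ∀ s, T.Adj t₀ s →
      (F ∩ branchVerts T β t₀ s).ncard ≤ (β t₀ ∩ β s).ncard) :
    False := by
  set X := β t₀
  have h₀ : X.ncard ≤ k := hbag t₀
  obtain ⟨f, hfX, hfC⟩ := hF.exists_ncard_le_add_reachOutside (X := X) (by omega)
  set C := G.reachOutside X f
  obtain ⟨s₀, hts₀, hCs₀⟩ := hTD.exists_reachOutside_subset hfX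
  have hFC : F ∩ C ⊆ F ∩ branchVerts T β t₀ s₀ :=
    inter_subset_inter_right F (hCs₀.trans sdiff_subset)
  have h₁ := ncard_le_ncard hFC
  have h₂ := hsink s₀ hts₀
  have h₃ : (X ∩ β s₀).ncard ≤ X.ncard := ncard_le_ncard inter_subset_left
  have hCk : (F ∩ C).ncard = k := by omega
  obtain ⟨n, hn⟩ := hTD.2.1 f
  refine hTD.1.isAcyclic.false_of_descent (n := n)
    (P := fun s t => T.Adj s t ∧ β s = X ∧ C ⊆ strictBranchVerts T β s t ∧
      F ∩ branchVerts T β s t ⊆ C)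
    (fun s t h =>
      ⟨h.1, hTD.mem_branch_of_mem_strictBranchVerts (h.2.2.1 mem_reachOutside_self) hn⟩)
    (fun s t ⟨hst, hsX, hCst, hFst⟩ => ?_)
    ⟨hts₀, rfl, hCs₀, (eq_of_subset_of_ncard_le hFC (by omega)) ▸ inter_subset_right⟩
  -- The near side holds the `2k` vertices of `F \ C`, so the far side is the light one; since it
  -- contains the `k` vertices of `F ∩ C`, the bags at `s` and `t` share `k` vertices.
  have hnear : F \ C ⊆ F ∩ branchVerts T β t s := fun v hv =>
    ⟨hv.1, (hTD.mem_branchVerts_or s t v).resolve_left fun h => hv.2 (hFst ⟨hv.1, h⟩)⟩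
  have h₄ := ncard_le_ncard hnear
  have h₅ := ncard_inter_add_ncard_sdiff_eq_ncard F C
  have h₆ : (β s ∩ β t).ncard ≤ k := (ncard_le_ncard inter_subset_left).trans (hbag s)
  have h₇ := ncard_le_ncard (inter_subset_inter_right F (hCst.trans sdiff_subset))
  have hfar :=
    (hTD.ncard_inter_branchVerts_le_or hF hbag (by omega) hst).resolve_right (by omega)
  have hbt : β t = X :=
    (Set.eq_of_ncard_le_ncard_inter (hbag s) (hbag t) (by omega)).symm.trans hsX
  obtain ⟨u, htu, hCu⟩ := hTD.exists_reachOutside_subset (t := t) (f := f) (hbt ▸ hfX)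
  rw [hbt] at hCu
  have hus : u ≠ s := by
    rintro rfl
    exact (hCu mem_reachOutside_self).2 (hCst mem_reachOutside_self).1
  exact ⟨u, htu, hbt, hCu, (inter_subset_inter_right F
    (branchVerts_mono (hTD.1.isAcyclic.branch_subset_branch hst htu hus))).trans hFst⟩

end IsTreeDecomp

end TreeDecomposition

/-- Let `k ≥ 1`, `G` a finite graph and `F` a strongly linked set of size
`3k` in `G`.  Then `tw(G) ≥ k`: every tree-decomposition of `G` has a bag of size at least
`k + 1`. -/
theorem stronglyLinked_treewidth_lb {V : Type*} [Fintype V] (G : SimpleGraph V) (k : ℕ)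
    (hk : 1 ≤ k) (F : Set V) (hF : StronglyLinked G F) (hFcard : F.ncard = 3 * k) :
    ∀ {ι : Type} (T : SimpleGraph ι) (β : ι → Set V),
      IsTreeDecomp G T β → ∃ t : ι, k + 1 ≤ (β t).ncard := by
  intro ι T β hTD
  by_contra! hsmall
  have hbag : ∀ t, (β t).ncard ≤ k := fun t => Nat.le_of_lt_succ (hsmall t)
  obtain rfl | hk₂ : k = 1 ∨ 2 ≤ k := by omega
  · obtain ⟨u, v, huv⟩ := hF.exists_adj (by omega)
    obtain ⟨t, hu, hv⟩ := hTD.2.2.1 u v huv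
    have := ncard_pair huv.ne ▸ ncard_le_ncard (pair_subset hu hv)
    have := hbag t
    omega
  · obtain ⟨t₀, hsink⟩ := hTD.exists_sink hF hbag (by omega)
    exact hTD.false_of_sink hF hbag hk₂ hFcard.ge hsink
end

section
/- Let k ≥ 1 be an integer and let G be a graph. Every strongly linked set S ⊆ V(G) of size 3k + 1 is (k, 2/3)-well-linked in G. -/
open SimpleGraph Finset

lemma my_ncard_biUnion {ι V : Type*} [Fintype V] (A : Finset ι) (f : ι → Set V)
    (h : ∀ i ∈ A, ∀ j ∈ A, i ≠ j → Disjoint (f i) (f j)) :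
    (⋃ i ∈ A, f i).ncard = ∑ i ∈ A, (f i).ncard := by
  classical
  induction A using Finset.induction_on with
  | empty => simp
  | @insert a s ha ih =>
    rw [Finset.set_biUnion_insert, Finset.sum_insert ha,
      Set.ncard_union_eq ?_ (Set.toFinite _) (Set.toFinite _),
      ih (fun i hi j hj hij => h i (Finset.mem_insert_of_mem hi) j
        (Finset.mem_insert_of_mem hj) hij)]
    rw [Set.disjoint_left]
    intro x hx hx'
    obtain ⟨i, hi, hxi⟩ := Set.mem_iUnion₂.mp hx'
    exact Set.disjoint_left.mp
      (h a (Finset.mem_insert_self a s) i (Finset.mem_insert_of_mem hi)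
        (by rintro rfl; exact ha hi)) hx hxi

lemma greedy_subset_sum {ι : Type*} [DecidableEq ι] (k : ℕ) (w : ι → ℕ) (s : Finset ι)
    (hw : ∀ i ∈ s, w i ≤ k) (hsum : k + 1 ≤ ∑ i ∈ s, w i) :
    ∃ A : Finset ι, A ⊆ s ∧ k + 1 ≤ ∑ i ∈ A, w i ∧ ∑ i ∈ A, w i ≤ 2 * k := by
  induction s using Finset.induction_on with
  | empty => simp at hsum
  | @insert a s ha ih =>
    by_cases htot : ∑ i ∈ insert a s, w i ≤ 2 * k
    · exact ⟨insert a s, subset_rfl, hsum, htot⟩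
    · have hwa : w a ≤ k := hw a (Finset.mem_insert_self a s)
      have : k + 1 ≤ ∑ i ∈ s, w i := by
        rw [Finset.sum_insert ha] at htot; omega
      obtain ⟨A, hAs, h1, h2⟩ := ih (fun i hi => hw i (Finset.mem_insert_of_mem hi)) this
      exact ⟨A, hAs.trans (Finset.subset_insert a s), h1, h2⟩

lemma exists_subset_sum {ι : Type*} [DecidableEq ι] [Fintype ι] (k : ℕ)
    (w : ι → ℕ) (hw : ∀ i, w i ≤ 2 * k) (hsum : k + 1 ≤ ∑ i, w i) :
    ∃ A : Finset ι, k + 1 ≤ ∑ i ∈ A, w i ∧ ∑ i ∈ A, w i ≤ 2 * k := by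
  by_cases hbig : ∃ i, k + 1 ≤ w i
  · obtain ⟨i, hi⟩ := hbig
    exact ⟨{i}, by simpa using hi, by simpa using hw i⟩
  · push_neg at hbig
    obtain ⟨A, _, h1, h2⟩ := greedy_subset_sum k w Finset.univ
      (fun i _ => by have := hbig i; omega) hsum
    exact ⟨A, h1, h2⟩



/-- Let `k ≥ 1` and let `G` be a finite graph.  Every strongly linked set
`S ⊆ V(G)` of size `3k + 1` is `(k, 2/3)`-well-linked in `G`. -/
theorem stronglyLinked_wellLinked {V : Type*} [Fintype V] (G : SimpleGraph V) (k : ℕ)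
    (hk : 1 ≤ k) (S : Set V) (hS : StronglyLinked G S) (hScard : S.ncard = 3 * k + 1) :
    WellLinked G k (2 / 3 : ℝ) S := by
  classical
  intro X hXcard hbal
  haveI : Fintype (G.induce Xᶜ).ConnectedComponent := Fintype.ofFinite _
  set H := G.induce Xᶜ with hHdef
  -- the blocks: intersections of S with components of G - X, and singletons from S ∩ X
  let block : H.ConnectedComponent ⊕ ↥(X ∩ S) → Set V :=
    Sum.elim (fun C => (Subtype.val '' C.supp) ∩ S) (fun x => {x.1})
  have hblockS : ∀ i, block i ⊆ S := by
    rintro (C | x)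
    · exact Set.inter_subset_right
    · simpa [block] using x.2.2
  have hdisj : ∀ i j, i ≠ j → Disjoint (block i) (block j) := by
    rintro (C | x) (C' | x') hne <;> rw [Set.disjoint_left]
    · rintro v ⟨⟨u, hu, rfl⟩, hvS⟩ ⟨⟨u', hu', huu'⟩, -⟩
      apply hne
      obtain rfl : u = u' := Subtype.val_injective huu'.symm
      rw [ConnectedComponent.mem_supp_iff] at hu hu'
      rw [← hu, ← hu']
    · rintro v ⟨⟨u, hu, rfl⟩, -⟩ hv
      simp only [block, Set.mem_singleton_iff, Sum.elim_inr] at hv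
      exact u.2 (hv ▸ x'.2.1)
    · rintro v hv ⟨⟨u, hu, rfl⟩, -⟩
      simp only [block, Set.mem_singleton_iff, Sum.elim_inl] at hv
      exact u.2 (hv ▸ x.2.1)
    · rintro v hv hv'
      simp only [block, Set.mem_singleton_iff, Sum.elim_inr] at hv hv'
      exact hne (by rw [Sum.inr.injEq]; exact Subtype.ext (hv.symm.trans hv'))
  have hcover : ⋃ i, block i = S := by
    apply Set.Subset.antisymm
    · exact Set.iUnion_subset hblockS
    · intro v hv
      by_cases hvX : v ∈ X
      · exact Set.mem_iUnion.mpr ⟨Sum.inr ⟨v, hvX, hv⟩, rfl⟩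
      · refine Set.mem_iUnion.mpr ⟨Sum.inl (H.connectedComponentMk ⟨v, hvX⟩), ⟨⟨v, hvX⟩, ?_, rfl⟩, hv⟩
        rw [ConnectedComponent.mem_supp_iff]
  have hw2k : ∀ i, (block i).ncard ≤ 2 * k := by
    rintro (C | x)
    · have h1 := hbal C
      rw [hScard] at h1
      have h2 : ((block (Sum.inl C)).ncard : ℝ) < 2 * k + 1 := by
        calc ((block (Sum.inl C)).ncard : ℝ) ≤ 2 / 3 * ((3 * k + 1 : ℕ) : ℝ) := h1
        _ < 2 * k + 1 := by push_cast; linarith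
      have h3 : (block (Sum.inl C)).ncard < 2 * k + 1 := by exact_mod_cast h2
      omega
    · simpa [block] using by omega
  have htotal : ∑ i, (block i).ncard = 3 * k + 1 := by
    have e1 := my_ncard_biUnion Finset.univ block (fun i _ j _ hij => hdisj i j hij)
    rw [show ⋃ i ∈ (Finset.univ : Finset (H.ConnectedComponent ⊕ ↥(X ∩ S))), block i = ⋃ i, block i by simp, hcover] at e1
    rw [← hScard]; exact e1.symm
  obtain ⟨A, hA1, hA2⟩ := exists_subset_sum k (fun i => (block i).ncard) hw2k
    (by rw [htotal]; omega)
  -- the two sides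
  set S₁ : Set V := ⋃ i ∈ A, block i with hS₁def
  have hS₁card : S₁.ncard = ∑ i ∈ A, (block i).ncard :=
    my_ncard_biUnion A block (fun i _ j _ hij => hdisj i j hij)
  have hS₁S : S₁ ⊆ S := Set.iUnion₂_subset fun i _ => hblockS i
  set S₂ : Set V := S \ S₁ with hS₂def
  have hS₂card : S₂.ncard = S.ncard - S₁.ncard := Set.ncard_diff hS₁S
  have hS₁b : k + 1 ≤ S₁.ncard ∧ S₁.ncard ≤ 2 * k := by rw [hS₁card]; exact ⟨hA1, hA2⟩
  have hS₂b : k + 1 ≤ S₂.ncard := by rw [hS₂card, hScard]; omega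
  -- the separation
  set A₁ : Set V := X ∪ (Subtype.val '' {u : ↥Xᶜ | Sum.inl (H.connectedComponentMk u) ∈ A})
    with hA₁def
  set A₂ : Set V := X ∪ (Subtype.val '' {u : ↥Xᶜ | Sum.inl (H.connectedComponentMk u) ∉ A})
    with hA₂def
  have hsep : IsSep G A₁ A₂ := by
    constructor
    · apply Set.eq_univ_of_forall
      intro v
      by_cases hvX : v ∈ X
      · exact Set.mem_union_left _ (Set.mem_union_left _ hvX)
      · by_cases hc : Sum.inl (H.connectedComponentMk ⟨v, hvX⟩) ∈ A
        · exact Set.mem_union_left _ (Set.mem_union_right _ ⟨⟨v, hvX⟩, hc, rfl⟩)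
        · exact Set.mem_union_right _ (Set.mem_union_right _ ⟨⟨v, hvX⟩, hc, rfl⟩)
    · rintro a b ⟨ha1, ha2⟩ ⟨hb1, hb2⟩ hadj
      have haX : a ∉ X := fun h => ha2 (Set.mem_union_left _ h)
      have hbX : b ∉ X := fun h => hb2 (Set.mem_union_left _ h)
      obtain ⟨ua, hua, rfl⟩ := ha1.resolve_left haX
      obtain ⟨ub, hub, rfl⟩ := hb1.resolve_left hbX
      have hHadj : H.Adj ua ub := by
        rw [hHdef]; simpa using hadj
      rw [Set.mem_setOf_eq] at hua hub
      rw [ConnectedComponent.connectedComponentMk_eq_of_adj hHadj] at hua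
      exact hub hua
  have hXsub : A₁ ∩ A₂ ⊆ X := by
    rintro v ⟨hv1, hv2⟩
    by_contra hvX
    obtain ⟨u, hu, rfl⟩ := hv1.resolve_left hvX
    obtain ⟨u', hu', huu'⟩ := hv2.resolve_left hvX
    obtain rfl : u' = u := Subtype.val_injective huu'
    exact hu' hu
  have hS₁A₁ : S₁ ⊆ A₁ := by
    intro v hv
    obtain ⟨i, hiA, hvi⟩ := Set.mem_iUnion₂.mp hv
    match i with
    | Sum.inl C =>
      obtain ⟨⟨u, hu, rfl⟩, -⟩ := hvi
      rw [ConnectedComponent.mem_supp_iff] at hu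
      exact Set.mem_union_right _ ⟨u, by rw [Set.mem_setOf_eq, hu]; exact hiA, rfl⟩
    | Sum.inr x =>
      simp only [block, Set.mem_singleton_iff, Sum.elim_inr] at hvi
      exact Set.mem_union_left _ (hvi ▸ x.2.1)
  have hS₂A₂ : S₂ ⊆ A₂ := by
    rintro v ⟨hvS, hvS₁⟩
    by_cases hvX : v ∈ X
    · exact Set.mem_union_left _ hvX
    · refine Set.mem_union_right _ ⟨⟨v, hvX⟩, ?_, rfl⟩
      rw [Set.mem_setOf_eq]
      intro hc
      apply hvS₁
      exact Set.mem_iUnion₂.mpr ⟨Sum.inl (H.connectedComponentMk ⟨v, hvX⟩), hc,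
        ⟨⟨v, hvX⟩, by rw [ConnectedComponent.mem_supp_iff], rfl⟩, hvS⟩
  have hmin := hS S₁ S₂ A₁ A₂ (Set.union_diff_cancel hS₁S) Set.disjoint_sdiff_right
    (Set.nonempty_of_ncard_ne_zero (by omega)) (Set.nonempty_of_ncard_ne_zero (by omega))
    hsep hS₁A₁ hS₂A₂
  have hord : (A₁ ∩ A₂).ncard ≤ k :=
    le_trans (Set.ncard_le_ncard hXsub (Set.toFinite X)) hXcard
  omega
end

section
/- For every integer k ≥ 1, the crosscap grid C_k (obtained from the (k,4k)-cylindrical grid by adding the edges {v^1_j v^1_{2k+j} | j ∈ [2k]}) contains the (2k × 2k)-grid as a spanning subgraph. -/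
/-!
Fold the `2k × 2k` grid along its middle. Its top `k` rows go, in reverse order, onto the
cylinder rows `k, …, 1` at positions `1, …, 2k`, and its bottom `k` rows onto the cylinder rows
`1, …, k` at positions `2k + 1, …, 4k`. Horizontal grid edges then become edges of the cycles,
vertical edges inside each half become edges between consecutive cylinder rows, and the `2k`
vertical edges across the fold become exactly the crosscap edges `v^1_j v^1_{2k+j}`.
-/

open SimpleGraph

/-- `H` is a minor of `G`: there is a minor model of `H` in `G`, i.e. a family of pairwise
disjoint connected branch sets, one for each vertex of `H`, such that every edge of `H` is
realised by an edge of `G` between the corresponding branch sets. -/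
def IsMinorOf {α β : Type*} (H : SimpleGraph α) (G : SimpleGraph β) : Prop :=
  ∃ X : α → Set β,
    (∀ u v : α, u ≠ v → Disjoint (X u) (X v)) ∧
    (∀ v : α, (G.induce (X v)).Connected) ∧
    (∀ u v : α, H.Adj u v → ∃ a ∈ X u, ∃ b ∈ X v, G.Adj a b)

/-- The mixed surface grid of order `k` built from the `(k, 4*n*k)`-cylindrical grid
(where `n = h + c + 1`), with a handle added at every position in `Ih` and a crosscap added
at every position in `Ic`.  The vertex `v_j^i` (for `i ∈ [k]`, `j ∈ ℤ/(4nk)`) is encoded as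
`(⟨i - 1⟩, j)`, so the top row `v^1` corresponds to first coordinate `0`. -/
def mixedGrid (k n : ℕ) (Ih Ic : Finset ℕ) :
    SimpleGraph (Fin k × ZMod (4 * n * k)) :=
  SimpleGraph.fromRel (fun p q =>
    (p.1 = q.1 ∧ q.2 = p.2 + 1) ∨
    (p.2 = q.2 ∧ (q.1 : ℕ) = (p.1 : ℕ) + 1) ∨
    ((p.1 : ℕ) = 0 ∧ (q.1 : ℕ) = 0 ∧ ∃ i ∈ Ih, ∃ j ∈ Finset.Icc 1 k,
      ((p.2 = ((4 * k * (i - 1) + j : ℕ) : ZMod (4 * n * k)) ∧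
        q.2 = ((4 * k * (i - 1) + 3 * k - j + 1 : ℕ) : ZMod (4 * n * k))) ∨
       (p.2 = ((4 * k * (i - 1) + k + j : ℕ) : ZMod (4 * n * k)) ∧
        q.2 = ((4 * k * (i - 1) + 4 * k - j + 1 : ℕ) : ZMod (4 * n * k))))) ∨
    ((p.1 : ℕ) = 0 ∧ (q.1 : ℕ) = 0 ∧ ∃ i ∈ Ic, ∃ j ∈ Finset.Icc 1 (2 * k),
      p.2 = ((4 * k * (i - 1) + j : ℕ) : ZMod (4 * n * k)) ∧
      q.2 = ((4 * k * (i - 1) + 2 * k + j : ℕ) : ZMod (4 * n * k))))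

/-- The Dyck grid `D_k^{(h,c)}`. -/
def dyckGrid (k h c : ℕ) : SimpleGraph (Fin k × ZMod (4 * (h + c + 1) * k)) :=
  mixedGrid k (h + c + 1) (Finset.Icc 2 (h + 1)) (Finset.Icc (h + 2) (h + c + 1))

/-- The `(p × q)`-grid: vertex set `[p] × [q]`, with `(i,j)` adjacent to `(i,j+1)` and to
`(i+1,j)`. -/
def gridGraph (p q : ℕ) : SimpleGraph (Fin p × Fin q) :=
  SimpleGraph.fromRel (fun a b =>
    (a.1 = b.1 ∧ (b.2 : ℕ) = (a.2 : ℕ) + 1) ∨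
    (a.2 = b.2 ∧ (b.1 : ℕ) = (a.1 : ℕ) + 1))

/-- The crosscap grid `C_k`: the `(k, 4k)`-cylindrical grid (the annulus grid `A_k`)
together with the crosscap edges `v^1_j v^1_{2k+j}` for `j ∈ [2k]` (a crosscap at
position `1`). -/
def crosscapGrid (k : ℕ) : SimpleGraph (Fin k × ZMod (4 * 1 * k)) :=
  mixedGrid k 1 (∅ : Finset ℕ) ({1} : Finset ℕ)

theorem ZMod.natCast_injOn_Iio (n : ℕ) : Set.InjOn (Nat.cast : ℕ → ZMod n) (Set.Iio n) :=
  fun a ha b hb hab => by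
    simpa [ZMod.val_cast_of_lt ha, ZMod.val_cast_of_lt hb] using congrArg ZMod.val hab

section mixedGrid

variable {k n : ℕ} {Ih Ic : Finset ℕ}

theorem mixedGrid_adj_add_one (hnk : 1 < 4 * n * k) (i : Fin k) (x : ZMod (4 * n * k)) :
    (mixedGrid k n Ih Ic).Adj (i, x) (i, x + 1) := by
  have : Fact (1 < 4 * n * k) := ⟨hnk⟩
  refine (fromRel_adj _ _ _).2 ⟨fun h => ?_, Or.inl (Or.inl ⟨rfl, rfl⟩)⟩
  simpa using congrArg Prod.snd h

theorem mixedGrid_adj_of_val_eq_succ {i j : Fin k} (hij : (j : ℕ) = i + 1)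
    (x : ZMod (4 * n * k)) : (mixedGrid k n Ih Ic).Adj (i, x) (j, x) := by
  refine (fromRel_adj _ _ _).2 ⟨fun h => ?_, Or.inl (Or.inr (Or.inl ⟨rfl, hij⟩))⟩
  have := congrArg (fun p => (p.1 : ℕ)) h
  simp only at this
  omega

end mixedGrid

theorem crosscapGrid_adj_crosscap {k j : ℕ} (hj : j ∈ Finset.Icc 1 (2 * k)) {i : Fin k}
    (hi : (i : ℕ) = 0) :
    (crosscapGrid k).Adj (i, (j : ZMod (4 * 1 * k))) (i, ((2 * k + j : ℕ) : ZMod (4 * 1 * k))) := by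
  refine (fromRel_adj _ _ _).2 ⟨fun h => ?_, Or.inl (Or.inr (Or.inr (Or.inr
    ⟨hi, hi, 1, Finset.mem_singleton_self 1, j, hj, by simp, by simp⟩)))⟩
  rw [Finset.mem_Icc] at hj
  have h2k : ((2 * k : ℕ) : ZMod (4 * 1 * k)) = (0 : ℕ) := by
    simpa [add_eq_right] using (congrArg Prod.snd h).symm
  have := ZMod.natCast_injOn_Iio _ (by simp only [Set.mem_Iio]; omega)
    (by simp only [Set.mem_Iio]; omega) h2k
  omega

def gridToCrosscap (k : ℕ) (p : Fin (2 * k) × Fin (2 * k)) : Fin k × ZMod (4 * 1 * k) :=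
  if h : (p.1 : ℕ) < k then (⟨k - 1 - p.1, by omega⟩, ((p.2 : ℕ) : ZMod (4 * 1 * k)) + 1)
  else (⟨p.1 - k, by omega⟩, ((p.2 : ℕ) : ZMod (4 * 1 * k)) + (2 * k + 1 : ℕ))

section gridToCrosscap

variable {k : ℕ} {r c : Fin (2 * k)}

theorem gridToCrosscap_of_lt (hr : (r : ℕ) < k) :
    gridToCrosscap k (r, c) = (⟨k - 1 - r, by omega⟩, ((c : ℕ) : ZMod (4 * 1 * k)) + 1) :=
  dif_pos hr

theorem gridToCrosscap_of_le (hr : k ≤ (r : ℕ)) :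
    gridToCrosscap k (r, c) = (⟨r - k, by omega⟩, ((c : ℕ) : ZMod (4 * 1 * k)) + (2 * k + 1 : ℕ)) :=
  dif_neg (not_lt.2 hr)

end gridToCrosscap

theorem gridToCrosscap_injective (k : ℕ) : Function.Injective (gridToCrosscap k) := by
  rintro ⟨r, c⟩ ⟨r', c'⟩ h
  have natCast_inj {a b : ℕ} (ha : a < 4 * 1 * k) (hb : b < 4 * 1 * k)
      (hab : (a : ZMod (4 * 1 * k)) = b) : a = b :=
    ZMod.natCast_injOn_Iio _ ha hb hab
  have := r.isLt; have := r'.isLt; have := c.isLt; have := c'.isLt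
  rcases lt_or_ge (r : ℕ) k with hr | hr <;> rcases lt_or_ge (r' : ℕ) k with hr' | hr' <;>
    simp only [gridToCrosscap_of_lt, gridToCrosscap_of_le, hr, hr', Prod.mk.injEq,
      Fin.mk.injEq] at h <;>
    obtain ⟨hrow, hcol⟩ := h
  · have := natCast_inj (by omega) (by omega) (add_right_cancel hcol)
    ext <;> simp only <;> omega
  · have := natCast_inj (a := c) (b := c' + 2 * k) (by omega) (by omega)
      (by push_cast at hcol ⊢; linear_combination hcol)
    omega
  · have := natCast_inj (a := c') (b := c + 2 * k) (by omega) (by omega)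
      (by push_cast at hcol ⊢; linear_combination -hcol)
    omega
  · have := natCast_inj (by omega) (by omega) (add_right_cancel hcol)
    ext <;> simp only <;> omega

theorem gridToCrosscap_bijective {k : ℕ} (hk : 0 < k) : Function.Bijective (gridToCrosscap k) := by
  have : NeZero (4 * 1 * k) := ⟨by omega⟩
  refine (Fintype.bijective_iff_injective_and_card _).2 ⟨gridToCrosscap_injective k, ?_⟩
  simp only [Fintype.card_prod, Fintype.card_fin, ZMod.card]
  ring

section adjacency

variable {k : ℕ} {r r' c c' : Fin (2 * k)}

theorem gridToCrosscap_adj_of_val_snd_eq_succ (h : (c' : ℕ) = c + 1) :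
    (crosscapGrid k).Adj (gridToCrosscap k (r, c)) (gridToCrosscap k (r, c')) := by
  have hc' : ((c' : ℕ) : ZMod (4 * 1 * k)) = (c : ℕ) + 1 := by rw [h]; push_cast; rfl
  have hk : 1 < 4 * 1 * k := by omega
  rcases lt_or_ge (r : ℕ) k with hr | hr
  · rw [gridToCrosscap_of_lt hr, gridToCrosscap_of_lt hr, hc']
    exact mixedGrid_adj_add_one hk _ _
  · rw [gridToCrosscap_of_le hr, gridToCrosscap_of_le hr, hc', add_right_comm]
    exact mixedGrid_adj_add_one hk _ _

theorem gridToCrosscap_adj_of_val_fst_eq_succ (h : (r' : ℕ) = r + 1) :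
    (crosscapGrid k).Adj (gridToCrosscap k (r, c)) (gridToCrosscap k (r', c)) := by
  rcases lt_trichotomy ((r : ℕ) + 1) k with hr | hr | hr
  · rw [gridToCrosscap_of_lt (show (r : ℕ) < k by omega),
      gridToCrosscap_of_lt (show (r' : ℕ) < k by omega)]
    exact (mixedGrid_adj_of_val_eq_succ (by simp only; omega) _).symm
  · rw [gridToCrosscap_of_lt (show (r : ℕ) < k by omega),
      gridToCrosscap_of_le (show k ≤ (r' : ℕ) by omega)]
    have hcross := crosscapGrid_adj_crosscap (k := k) (j := c + 1) (by simp)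
      (i := ⟨0, by omega⟩) rfl
    push_cast at hcross ⊢
    convert hcross using 2
    · simp only [Fin.mk.injEq]; omega
    · simp only [Fin.mk.injEq]; omega
    · ring
  · rw [gridToCrosscap_of_le (show k ≤ (r : ℕ) by omega),
      gridToCrosscap_of_le (show k ≤ (r' : ℕ) by omega)]
    exact mixedGrid_adj_of_val_eq_succ (by simp only; omega) _

end adjacency

theorem gridToCrosscap_adj {k : ℕ} {u v : Fin (2 * k) × Fin (2 * k)}
    (huv : (gridGraph (2 * k) (2 * k)).Adj u v) :
    (crosscapGrid k).Adj (gridToCrosscap k u) (gridToCrosscap k v) := by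
  suffices h : ∀ u v : Fin (2 * k) × Fin (2 * k),
      (u.1 = v.1 ∧ (v.2 : ℕ) = u.2 + 1) ∨ (u.2 = v.2 ∧ (v.1 : ℕ) = u.1 + 1) →
      (crosscapGrid k).Adj (gridToCrosscap k u) (gridToCrosscap k v) by
    obtain ⟨-, huv | hvu⟩ := (fromRel_adj _ _ _).1 huv
    exacts [h u v huv, (h v u hvu).symm]
  rintro ⟨r, c⟩ ⟨r', c'⟩ (⟨rfl, h⟩ | ⟨rfl, h⟩)
  exacts [gridToCrosscap_adj_of_val_snd_eq_succ h, gridToCrosscap_adj_of_val_fst_eq_succ h]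

/-- For every integer `k ≥ 1`, the crosscap grid `C_k` contains the
`(2k × 2k)`-grid as a spanning subgraph: there is a bijection from the vertices of the
`(2k × 2k)`-grid onto the vertices of `C_k` carrying edges to edges. -/
theorem crosscapGrid_contains_spanning_grid (k : ℕ) (hk : 1 ≤ k) :
    ∃ f : Fin (2 * k) × Fin (2 * k) → Fin k × ZMod (4 * 1 * k),
      Function.Bijective f ∧
      ∀ u v, (gridGraph (2 * k) (2 * k)).Adj u v → (crosscapGrid k).Adj (f u) (f v) :=
  ⟨gridToCrosscap k, gridToCrosscap_bijective hk, fun _ _ => gridToCrosscap_adj⟩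
end
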